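/- Let q ∈ ℕ, d ∈ {1,2,4}, and for μ > d(q-1/2), let (μ)_λ be the generalized Pochhammer symbol. Then for all partitions λ and μ > d(q-1/2): (μ)_λ ≥ 2^{-dq(q-1)/2} · μ^{|λ|}. -/

import Mathlib

/-!
Write `(μ)_λ = ∏_j (a_j)_{λ_j}` with `a_j = μ - (d/2) j`. In the rising factorial
`(a_j)_{λ_j} = a_j (a_j + 1) ⋯` only the first `d j` factors can be smaller than `μ`, and each of
them is at least `μ/2` because `d j ≤ d (q - 1) < μ`. Hence `(a_j)_{λ_j} ≥ 2^{-d j} μ^{λ_j}`, and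
multiplying over `j` gives the exponent `∑_j d j = d q (q - 1) / 2`.
-/

/-- The generalized Pochhammer symbol `(μ)_λ = ∏_{j=1}^q (μ - (d/2)(j-1))_{λ_j}`,
where `(a)_n` is the rising factorial. -/
noncomputable def genPochhammer (d q : ℕ) (μ : ℝ) (lam : Fin q → ℕ) : ℝ :=
  ∏ j : Fin q, (ascPochhammer ℝ (lam j)).eval (μ - (d : ℝ) / 2 * (j : ℕ))

open Polynomial

section AscPochhammer

variable {S : Type*}

theorem ascPochhammer_succ_eval_left [CommSemiring S] (n : ℕ) (a : S) :
    (ascPochhammer S (n + 1)).eval a = a * (ascPochhammer S n).eval (a + 1) := by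
  rw [ascPochhammer_succ_left, eval_mul, eval_X, eval_comp, eval_add, eval_X, eval_one]

variable [CommSemiring S] [PartialOrder S] [IsStrictOrderedRing S]

theorem pow_le_ascPochhammer_eval (n : ℕ) {a : S} (ha : 0 ≤ a) :
    a ^ n ≤ (ascPochhammer S n).eval a := by
  induction n with
  | zero => simp
  | succ n ih =>
    rw [ascPochhammer_succ_eval, pow_succ]
    exact mul_le_mul ih (le_add_of_nonneg_right n.cast_nonneg) ha
      ((pow_nonneg ha n).trans ih)

end AscPochhammer

theorem inv_two_pow_mul_pow_le_ascPochhammer_eval {S : Type*} [Field S] [LinearOrder S]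
    [IsStrictOrderedRing S] (m n : ℕ) {μ a : S} (hμ : 0 ≤ μ) (ha : μ / 2 ≤ a)
    (hm : μ ≤ a + m) :
    ((2 : S) ^ m)⁻¹ * μ ^ n ≤ (ascPochhammer S n).eval a := by
  induction m generalizing a n with
  | zero =>
    simp only [Nat.cast_zero, add_zero] at hm
    simpa using (pow_le_pow_left₀ hμ hm n).trans (pow_le_ascPochhammer_eval n (hμ.trans hm))
  | succ m ih =>
    cases n with
    | zero => simpa using inv_le_one_of_one_le₀ (one_le_pow₀ one_le_two)
    | succ n =>
      have hrest := ih n (a := a + 1) (by linarith) (by push_cast at hm; linarith)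
      calc ((2 : S) ^ (m + 1))⁻¹ * μ ^ (n + 1) = μ / 2 * (((2 : S) ^ m)⁻¹ * μ ^ n) := by
            field_simp
            ring
        _ ≤ a * (ascPochhammer S n).eval (a + 1) :=
            mul_le_mul ha hrest (by positivity) ((div_nonneg hμ zero_le_two).trans ha)
        _ = (ascPochhammer S (n + 1)).eval a := (ascPochhammer_succ_eval_left n a).symm

theorem Fin.sum_mul_val_eq (d q : ℕ) : ∑ j : Fin q, d * (j : ℕ) = d * q * (q - 1) / 2 := by
  rw [← Finset.mul_sum, Fin.sum_univ_eq_sum_range (fun i => i) q, mul_assoc,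
    ← Finset.sum_range_id_mul_two, ← mul_assoc, Nat.mul_div_cancel _ two_pos]

theorem mul_val_lt_of_mul_sub_half_lt {d q : ℕ} {μ : ℝ} (hμ : (d : ℝ) * ((q : ℝ) - 1 / 2) < μ)
    (j : Fin q) : (d : ℝ) * (j : ℕ) < μ := by
  have hjq : ((j : ℕ) : ℝ) + 1 ≤ q := by exact_mod_cast j.isLt
  nlinarith [(d.cast_nonneg : (0 : ℝ) ≤ d)]

theorem inv_two_pow_mul_pow_le_genPochhammer_factor {d q : ℕ} {μ : ℝ}
    (hμ : (d : ℝ) * ((q : ℝ) - 1 / 2) < μ) (n : ℕ) (j : Fin q) :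
    ((2 : ℝ) ^ (d * (j : ℕ)))⁻¹ * μ ^ n ≤ (ascPochhammer ℝ n).eval (μ - (d : ℝ) / 2 * (j : ℕ)) := by
  have hdj := mul_val_lt_of_mul_sub_half_lt hμ j
  have hdj0 : (0 : ℝ) ≤ d * (j : ℕ) := by positivity
  exact inv_two_pow_mul_pow_le_ascPochhammer_eval _ _ (by linarith) (by linarith)
    (by push_cast; linarith)

theorem stmt_8_general (d q : ℕ) (lam : Fin q → ℕ)
    (μ : ℝ) (hμ : (d : ℝ) * ((q : ℝ) - 1 / 2) < μ) :
    ((2 : ℝ) ^ (d * q * (q - 1) / 2))⁻¹ * μ ^ (∑ j, lam j) ≤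
      genPochhammer d q μ lam := by
  have hμ0 (j : Fin q) : 0 ≤ μ :=
    (by positivity : (0 : ℝ) ≤ d * (j : ℕ)).trans (mul_val_lt_of_mul_sub_half_lt hμ j).le
  calc ((2 : ℝ) ^ (d * q * (q - 1) / 2))⁻¹ * μ ^ (∑ j, lam j)
      = ∏ j : Fin q, ((2 : ℝ) ^ (d * (j : ℕ)))⁻¹ * μ ^ (lam j) := by
        rw [Finset.prod_mul_distrib, Finset.prod_inv_distrib, Finset.prod_pow_eq_pow_sum,
          Finset.prod_pow_eq_pow_sum, Fin.sum_mul_val_eq]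
    _ ≤ genPochhammer d q μ lam :=
        Finset.prod_le_prod
          (fun j _ => mul_nonneg (by positivity) (pow_nonneg (hμ0 j) _))
          (fun j _ => inv_two_pow_mul_pow_le_genPochhammer_factor hμ (lam j) j)

theorem stmt_8 (d q : ℕ) (hd : d ∈ ({1, 2, 4} : Set ℕ)) (lam : Fin q → ℕ)
    (hlam : Antitone lam) (μ : ℝ) (hμ : (d : ℝ) * ((q : ℝ) - 1 / 2) < μ) :
    ((2 : ℝ) ^ (d * q * (q - 1) / 2))⁻¹ * μ ^ (∑ j, lam j) ≤
      genPochhammer d q μ lam :=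
  stmt_8_general d q lam μ hμ
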